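/- There is an absolute constant c > 0 such that for every finite connected graph X, every integer n > 1, and every Lipschitz map T : X → ℝⁿ with Lipschitz constant at most 1 which is centered, i.e. ∑_{x∈X} T(x) μ(x) = 0, there exists a unit vector θ ∈ S^{n−1} such that (∑_{x∈X} ⟨T(x), θ⟩² μ(x))^{1/2} ≤ c · n^{−1/2} · λ_{⌊n/2⌋}^{−1/2}, where λ_{⌊n/2⌋} is the ⌊n/2⌋-th smallest nonzero eigenvalue of the Laplacian of X (counted with multiplicity). -/

import Mathlib

/-- The graph Laplacian `Δf(x) = 2 (f x - (1/deg x) ∑_{y ∼ x} f y)`. -/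
noncomputable def graphLaplacian {V : Type*} [Fintype V] (G : SimpleGraph V)
    [DecidableRel G.Adj] (f : V → ℝ) (x : V) : ℝ :=
  2 * (f x - ((G.degree x : ℝ))⁻¹ * ∑ y ∈ G.neighborFinset x, f y)

/-- The stationary measure of the simple random walk, `μ x = deg x / (2 |E|)`
(note that `2 |E| = ∑_y deg y`). -/
noncomputable def stationaryMeasure {V : Type*} [Fintype V] (G : SimpleGraph V)
    [DecidableRel G.Adj] (x : V) : ℝ :=
  (G.degree x : ℝ) / (∑ y : V, (G.degree y : ℝ))

/-!
For `θ ∈ ℝⁿ` put `g_θ x = ⟨T x, θ⟩`. The vectors `∑ₓ μ(x) fᵢ(x) T x` for the eigenfunctions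
`fᵢ` below `λ_{⌊n/2⌋}` span a subspace of dimension less than `n/2`. Bessel's inequality in an
orthonormal basis of its orthogonal complement `W`, applied to the edge increments `T x - T y`
(of norm at most `1`), yields a unit `θ ∈ W` with Dirichlet energy `[Δg_θ, g_θ] ≤ 2/n`. Such a
`g_θ` has mean zero and is orthogonal to those eigenfunctions; since the eigenfunctions and the
constants span all functions, and eigenfunctions of distinct eigenvalues are orthogonal, this
forces `λ_{⌊n/2⌋} [g_θ, g_θ] ≤ [Δg_θ, g_θ] ≤ 2/n`.
-/

open Finset Module RealInnerProductSpace Matrix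

section EigenvectorBounds

variable {E : Type*} [AddCommGroup E] [Module ℝ E] {B : LinearMap.BilinForm ℝ E}
  {L : E →ₗ[ℝ] E}

theorem LinearMap.IsAdjointPair.apply_eq_zero_of_eigen_ne (hL : B.IsAdjointPair B L L)
    {u v : E} {a b : ℝ} (hu : L u = a • u) (hv : L v = b • v) (hab : a ≠ b) : B u v = 0 := by
  have h : a * B u v = b * B u v := by
    simpa [hu, hv] using hL u v
  exact (mul_eq_mul_right_iff.mp h).resolve_left hab

theorem LinearMap.IsAdjointPair.mul_apply_le_of_sum_eigen (hL : B.IsAdjointPair B L L)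
    (hB : ∀ u, 0 ≤ B u u) (S : Finset ℝ) (w : ℝ → E) (hw : ∀ l, L (w l) = l • w l)
    {c : ℝ} (horth : ∀ l ∈ S, l < c → B (w l) (∑ k ∈ S, w k) = 0) :
    c * B (∑ l ∈ S, w l) (∑ l ∈ S, w l) ≤ B (L (∑ l ∈ S, w l)) (∑ l ∈ S, w l) := by
  set g := ∑ l ∈ S, w l with hg
  have hdiag : ∀ l ∈ S, B (w l) g = B (w l) (w l) := by
    intro l hl
    rw [hg, map_sum, sum_eq_single_of_mem l hl]
    exact fun k _ hkl => hL.apply_eq_zero_of_eigen_ne (hw l) (hw k) (Ne.symm hkl)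
  have hLg : L g = ∑ l ∈ S, l • w l := by simp only [hg, map_sum, hw]
  rw [hLg, LinearMap.map_sum₂, hg, LinearMap.map_sum₂, ← hg, mul_sum]
  simp only [map_smul, LinearMap.smul_apply, smul_eq_mul]
  refine sum_le_sum fun l hl => ?_
  rcases lt_or_ge l c with hlc | hcl
  · simp [horth l hl hlc]
  · exact mul_le_mul_of_nonneg_right hcl (hdiag l hl ▸ hB (w l))

theorem LinearMap.IsAdjointPair.mul_apply_le_of_mem_span_eigen (hL : B.IsAdjointPair B L L)
    (hB : ∀ u, 0 ≤ B u u) {ι : Type*} [Fintype ι] [LinearOrder ι] {lam : ι → ℝ}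
    (hmono : Monotone lam) {f : ι → E} (hf : ∀ i, L (f i) = lam i • f i) (m : ι) {g : E}
    (hg : g ∈ Submodule.span ℝ (Set.range f)) (horth : ∀ i < m, B (f i) g = 0) :
    lam m * B g g ≤ B (L g) g := by
  classical
  obtain ⟨a, rfl⟩ := (Submodule.mem_span_range_iff_exists_fun ℝ).mp hg
  set w : ℝ → E := fun l => ∑ i with lam i = l, a i • f i
  have hsum : ∑ i, a i • f i = ∑ l ∈ univ.image lam, w l :=
    (sum_fiberwise_of_maps_to (fun i _ => mem_image_of_mem lam (mem_univ i)) _).symm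
  have hw : ∀ l, L (w l) = l • w l := by
    intro l
    simp only [w, map_sum, map_smul, hf, smul_sum]
    exact sum_congr rfl fun i hi => by rw [(mem_filter.mp hi).2, smul_comm]
  rw [hsum]
  refine hL.mul_apply_le_of_sum_eigen hB _ w hw fun l _ hl => ?_
  rw [← hsum, LinearMap.map_sum₂]
  refine sum_eq_zero fun i hi => ?_
  rw [map_smul, LinearMap.smul_apply, horth i (hmono.reflect_lt ((mem_filter.mp hi).2 ▸ hl)),
    smul_zero]

end EigenvectorBounds

theorem Submodule.span_range_eq_ker_of_linearIndependent {K V ι : Type*} [Field K]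
    [AddCommGroup V] [Module K V] [FiniteDimensional K V] [Fintype ι] {φ : Module.Dual K V}
    (hφ : φ ≠ 0) {f : ι → V} (hf : LinearIndependent K f)
    (hcard : Fintype.card ι + 1 = Module.finrank K V)
    (hker : ∀ i, φ (f i) = 0) : Submodule.span K (Set.range f) = LinearMap.ker φ :=
  Submodule.eq_of_le_of_finrank_eq (Submodule.span_le.mpr (Set.range_subset_iff.mpr hker)) (by
    have := Module.Dual.finrank_ker_add_one_of_ne_zero hφ
    rw [finrank_span_eq_card hf]; omega)

theorem Submodule.exists_norm_eq_one_finrank_mul_sum_inner_sq_le {F : Type*}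
    [NormedAddCommGroup F] [InnerProductSpace ℝ F] (W : Submodule ℝ F) [FiniteDimensional ℝ W]
    (hW : 0 < finrank ℝ W) {ι : Type*} (s : Finset ι) (u : ι → F) :
    ∃ θ ∈ W, ‖θ‖ = 1 ∧ (finrank ℝ W : ℝ) * ∑ i ∈ s, ⟪u i, θ⟫ ^ 2 ≤ ∑ i ∈ s, ‖u i‖ ^ 2 := by
  set e : Fin (finrank ℝ W) → F := W.subtypeₗᵢ ∘ stdOrthonormalBasis ℝ W
  have he : Orthonormal ℝ e := (stdOrthonormalBasis ℝ W).orthonormal.comp_linearIsometry _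
  have hbessel : ∑ j, ∑ i ∈ s, ⟪u i, e j⟫ ^ 2 ≤ ∑ i ∈ s, ‖u i‖ ^ 2 := by
    rw [sum_comm]
    refine sum_le_sum fun i _ => le_of_eq_of_le (sum_congr rfl fun j _ => ?_)
      (he.sum_inner_products_le (u i))
    rw [real_inner_comm, Real.norm_eq_abs, sq_abs]
  obtain ⟨j, -, hj⟩ := exists_le_of_sum_le (univ_nonempty_iff.mpr ⟨⟨0, hW⟩⟩)
    (f := fun j => (finrank ℝ W : ℝ) * ∑ i ∈ s, ⟪u i, e j⟫ ^ 2)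
    (g := fun _ => ∑ j, ∑ i ∈ s, ⟪u i, e j⟫ ^ 2) (by simp [← mul_sum])
  exact ⟨e j, (stdOrthonormalBasis ℝ W j).2, he.1 j, hj.trans hbessel⟩

theorem Finset.sub_card_le_finrank_orthogonal_span {F : Type*} [NormedAddCommGroup F]
    [InnerProductSpace ℝ F] [FiniteDimensional ℝ F] (A : Finset F) :
    finrank ℝ F - #A ≤ finrank ℝ (Submodule.span ℝ (A : Set F))ᗮ := by
  have h1 := (Submodule.span ℝ (A : Set F)).finrank_add_finrank_orthogonal
  have h2 := finrank_span_finset_le_card (R := ℝ) A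
  unfold Set.finrank at h2
  omega

section WeightedInner

variable {V : Type*} [Fintype V]

noncomputable def weightedInner (w : V → ℝ) : LinearMap.BilinForm ℝ (V → ℝ) :=
  LinearMap.mk₂ ℝ (fun f g => ∑ x, w x * f x * g x)
    (fun f f' g => by
      rw [← sum_add_distrib]; exact sum_congr rfl fun x _ => by rw [Pi.add_apply]; ring)
    (fun c f g => by
      rw [smul_eq_mul, mul_sum]; exact sum_congr rfl fun x _ => by rw [Pi.smul_apply]; ring)
    (fun f g g' => by
      rw [← sum_add_distrib]; exact sum_congr rfl fun x _ => by rw [Pi.add_apply]; ring)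
    (fun c f g => by
      rw [smul_eq_mul, mul_sum]; exact sum_congr rfl fun x _ => by rw [Pi.smul_apply]; ring)

theorem weightedInner_apply (w f g : V → ℝ) : weightedInner w f g = ∑ x, w x * f x * g x := rfl

theorem weightedInner_comm (w f g : V → ℝ) : weightedInner w f g = weightedInner w g f := by
  simp only [weightedInner_apply, mul_right_comm]

theorem weightedInner_self_nonneg {w : V → ℝ} (hw : 0 ≤ w) (f : V → ℝ) :
    0 ≤ weightedInner w f f :=
  sum_nonneg fun x _ => by rw [mul_assoc]; exact mul_nonneg (hw x) (mul_self_nonneg _)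

theorem weightedInner_self_pos {w : V → ℝ} (hw : ∀ x, 0 < w x) {f : V → ℝ} (hf : f ≠ 0) :
    0 < weightedInner w f f := by
  obtain ⟨x, hx⟩ := Function.ne_iff.mp hf
  refine sum_pos' (fun y _ => ?_) ⟨x, mem_univ x, ?_⟩ <;> rw [mul_assoc]
  · exact mul_nonneg (hw y).le (mul_self_nonneg _)
  · exact mul_pos (hw x) (mul_self_pos.mpr hx)

theorem weightedInner_inner_right {F : Type*} [NormedAddCommGroup F] [InnerProductSpace ℝ F]
    (w h : V → ℝ) (T : V → F) (θ : F) :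
    weightedInner w h (fun x => ⟪T x, θ⟫) = ⟪∑ x, (w x * h x) • T x, θ⟫ := by
  simp only [weightedInner_apply, sum_inner, real_inner_smul_left]

end WeightedInner

namespace SimpleGraph

variable {V : Type*} [Fintype V] (G : SimpleGraph V) [DecidableRel G.Adj]

noncomputable def graphLaplacianₗ : (V → ℝ) →ₗ[ℝ] V → ℝ where
  toFun := graphLaplacian G
  map_add' f g := by ext x; simp only [graphLaplacian, Pi.add_apply, sum_add_distrib]; ring
  map_smul' c f := by ext x; simp only [graphLaplacian, Pi.smul_apply, smul_eq_mul, ← mul_sum,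
    RingHom.id_apply]; ring

theorem stationaryMeasure_nonneg : 0 ≤ stationaryMeasure G := fun x => by
  unfold stationaryMeasure; positivity

theorem stationaryMeasure_mul_graphLaplacian [DecidableEq V] (f : V → ℝ) (x : V) :
    stationaryMeasure G x * graphLaplacian G f x =
      2 / (∑ y, (G.degree y : ℝ)) * (G.lapMatrix ℝ *ᵥ f) x := by
  rw [lapMatrix_mulVec_apply, stationaryMeasure, graphLaplacian]
  rcases eq_or_ne (G.degree x : ℝ) 0 with hx | hx
  -- at an isolated vertex `deg⁻¹ = 0⁻¹ = 0` and the neighbour sum is empty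
  · have : G.neighborFinset x = ∅ := by
      rw [← card_eq_zero, card_neighborFinset_eq_degree]; exact_mod_cast hx
    simp [hx, this]
  · field_simp

/-- The Laplacian is `2 D⁻¹ (D - A)` and `μ = D / ∑ deg`, so against `μ` it is the quadratic
form of `lapMatrix` up to the factor `2 / ∑ deg`. -/
theorem weightedInner_graphLaplacian [DecidableEq V] (f g : V → ℝ) :
    weightedInner (stationaryMeasure G) (graphLaplacian G f) g =
      2 / (∑ y, (G.degree y : ℝ)) * toLinearMap₂' ℝ (G.lapMatrix ℝ) g f := by
  simp only [weightedInner_apply, ← mul_assoc, stationaryMeasure_mul_graphLaplacian,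
    toLinearMap₂'_apply', dotProduct, mul_sum]
  exact sum_congr rfl fun x _ => by ring

theorem isAdjointPair_graphLaplacianₗ :
    (weightedInner (stationaryMeasure G)).IsAdjointPair (weightedInner (stationaryMeasure G))
      (graphLaplacianₗ G) (graphLaplacianₗ G) := fun f g => by
  classical
  change weightedInner _ (graphLaplacian G f) g = weightedInner _ f (graphLaplacian G g)
  rw [weightedInner_comm _ f, weightedInner_graphLaplacian, weightedInner_graphLaplacian,
    toLinearMap₂'_apply', toLinearMap₂'_apply', dotProduct_mulVec, ← mulVec_transpose,
    G.isSymm_lapMatrix ℝ, dotProduct_comm]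

theorem weightedInner_graphLaplacian_self (g : V → ℝ) :
    weightedInner (stationaryMeasure G) (graphLaplacian G g) g =
      (∑ y, (G.degree y : ℝ))⁻¹ * ∑ p ∈ univ.filter (fun p : V × V => G.Adj p.1 p.2),
        (g p.1 - g p.2) ^ 2 := by
  classical
  rw [weightedInner_graphLaplacian, lapMatrix_toLinearMap₂', sum_filter, ← univ_product_univ,
    sum_product]
  ring

theorem weightedInner_graphLaplacian_self_nonneg (g : V → ℝ) :
    0 ≤ weightedInner (stationaryMeasure G) (graphLaplacian G g) g := by
  rw [weightedInner_graphLaplacian_self]; positivity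

theorem stationaryMeasure_pos (hd : ∀ x, 0 < G.degree x) (x : V) : 0 < stationaryMeasure G x :=
  div_pos (by exact_mod_cast hd x) <|
    sum_pos (fun y _ => by exact_mod_cast hd y) ⟨x, mem_univ x⟩

theorem graphLaplacian_const (hd : ∀ x, 0 < G.degree x) (c : ℝ) :
    graphLaplacian G (fun _ => c) = 0 := by
  ext x
  have : (G.degree x : ℝ) ≠ 0 := by exact_mod_cast (hd x).ne'
  simp [graphLaplacian, card_neighborFinset_eq_degree, this]

theorem weightedInner_one_eq_zero_of_eigen (hd : ∀ x, 0 < G.degree x) {f : V → ℝ} {l : ℝ}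
    (hl : l ≠ 0) (hf : graphLaplacian G f = l • f) : weightedInner (stationaryMeasure G) 1 f = 0 :=
  (isAdjointPair_graphLaplacianₗ G).apply_eq_zero_of_eigen_ne (a := 0)
    (by rw [zero_smul]; exact G.graphLaplacian_const hd 1) hf hl.symm

theorem eigenvalue_nonneg (hd : ∀ x, 0 < G.degree x) {f : V → ℝ} (hf0 : f ≠ 0) {l : ℝ}
    (hf : graphLaplacian G f = l • f) : 0 ≤ l := by
  have henergy := G.weightedInner_graphLaplacian_self_nonneg f
  rw [hf, map_smul, LinearMap.smul_apply, smul_eq_mul] at henergy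
  exact nonneg_of_mul_nonneg_left henergy (weightedInner_self_pos (G.stationaryMeasure_pos hd) hf0)

/-- The eigenfunctions are orthogonal to the constants, so by counting dimensions they span the
mean-zero functions. -/
theorem eigenvalue_mul_weightedInner_le_of_orthogonal (hd : ∀ x, 0 < G.degree x) {ι : Type*}
    [Fintype ι] [LinearOrder ι] (hcard : Fintype.card ι + 1 = Fintype.card V) {lam : ι → ℝ}
    (hmono : Monotone lam) (hne : ∀ i, lam i ≠ 0) {f : ι → V → ℝ} (hli : LinearIndependent ℝ f)
    (heig : ∀ i, graphLaplacian G (f i) = lam i • f i) (m : ι) {g : V → ℝ}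
    (hmean : weightedInner (stationaryMeasure G) 1 g = 0)
    (horth : ∀ i < m, weightedInner (stationaryMeasure G) (f i) g = 0) :
    lam m * weightedInner (stationaryMeasure G) g g ≤
      weightedInner (stationaryMeasure G) (graphLaplacian G g) g := by
  have : Nonempty V := Fintype.card_pos_iff.mp (by omega)
  have hφ : weightedInner (stationaryMeasure G) 1 ≠ 0 := fun h =>
    (weightedInner_self_pos (G.stationaryMeasure_pos hd) one_ne_zero).ne' (LinearMap.congr_fun h 1)
  have hspan := Submodule.span_range_eq_ker_of_linearIndependent hφ hli
    (by rwa [Module.finrank_fintype_fun_eq_card])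
    fun i => G.weightedInner_one_eq_zero_of_eigen hd (hne i) (heig i)
  exact (isAdjointPair_graphLaplacianₗ G).mul_apply_le_of_mem_span_eigen
    (weightedInner_self_nonneg G.stationaryMeasure_nonneg) hmono heig m
    (hspan ▸ LinearMap.mem_ker.mpr hmean) horth

/-- In an orthonormal basis of `W` the Dirichlet energies of the coordinates of `T` add up to at
most `1`, by Bessel's inequality on each edge. -/
theorem exists_norm_eq_one_finrank_mul_energy_le {F : Type*} [NormedAddCommGroup F]
    [InnerProductSpace ℝ F] (T : V → F) (hT : ∀ x y, G.Adj x y → ‖T x - T y‖ ≤ 1)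
    (W : Submodule ℝ F) [FiniteDimensional ℝ W] (hW : 0 < finrank ℝ W) :
    ∃ θ ∈ W, ‖θ‖ = 1 ∧ (finrank ℝ W : ℝ) *
      weightedInner (stationaryMeasure G) (graphLaplacian G fun x => ⟪T x, θ⟫)
        (fun x => ⟪T x, θ⟫) ≤ 1 := by
  set s := univ.filter fun p : V × V => G.Adj p.1 p.2
  obtain ⟨θ, hθW, hθ, hle⟩ :=
    W.exists_norm_eq_one_finrank_mul_sum_inner_sq_le hW s fun p => T p.1 - T p.2
  refine ⟨θ, hθW, hθ, ?_⟩
  have hcard : (#s : ℝ) = ∑ y, (G.degree y : ℝ) := by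
    exact_mod_cast (G.two_mul_card_edgeFinset.symm.trans G.sum_degrees_eq_twice_card_edges.symm)
  have hs : ∑ p ∈ s, ‖T p.1 - T p.2‖ ^ 2 ≤ #s := by
    rw [← nsmul_one, ← sum_const]
    exact sum_le_sum fun p hp => pow_le_one₀ (norm_nonneg _) (hT _ _ (mem_filter.mp hp).2)
  rw [weightedInner_graphLaplacian_self, mul_left_comm]
  simp only [← inner_sub_left]
  calc _ ≤ (∑ y, (G.degree y : ℝ))⁻¹ * #s := by gcongr; exact hle.trans hs
    _ ≤ 1 := inv_mul_le_one_of_le₀ hcard.le (by positivity)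

theorem exists_norm_eq_one_mul_eigenvalue_mul_weightedInner_le {F : Type*}
    [NormedAddCommGroup F] [InnerProductSpace ℝ F] [FiniteDimensional ℝ F]
    (hd : ∀ x, 0 < G.degree x) {ι : Type*} [Fintype ι] [LinearOrder ι] [LocallyFiniteOrderBot ι]
    (hcard : Fintype.card ι + 1 = Fintype.card V) {lam : ι → ℝ} (hmono : Monotone lam)
    (hne : ∀ i, lam i ≠ 0) {f : ι → V → ℝ} (hli : LinearIndependent ℝ f)
    (heig : ∀ i, graphLaplacian G (f i) = lam i • f i) (m : ι) (hm : #(Iio m) < finrank ℝ F)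
    (T : V → F) (hT : ∀ x y, G.Adj x y → ‖T x - T y‖ ≤ 1)
    (hcent : ∑ x, stationaryMeasure G x • T x = 0) :
    ∃ θ : F, ‖θ‖ = 1 ∧ ((finrank ℝ F - #(Iio m) : ℕ) : ℝ) *
      (lam m * weightedInner (stationaryMeasure G) (fun x => ⟪T x, θ⟫) fun x => ⟪T x, θ⟫) ≤ 1 := by
  classical
  set v := fun i => ∑ x, (stationaryMeasure G x * f i x) • T x
  set W := (Submodule.span ℝ (((Iio m).image v : Finset F) : Set F))ᗮ
  have hW : finrank ℝ F - #(Iio m) ≤ finrank ℝ W := (Nat.sub_le_sub_left card_image_le _).trans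
    ((Iio m).image v).sub_card_le_finrank_orthogonal_span
  obtain ⟨θ, hθW, hθ, hθE⟩ := G.exists_norm_eq_one_finrank_mul_energy_le T hT W (by omega)
  refine ⟨θ, hθ, ?_⟩
  set g : V → ℝ := fun x => ⟪T x, θ⟫
  have hray := G.eigenvalue_mul_weightedInner_le_of_orthogonal hd hcard hmono hne hli heig m
    (g := g) (by simpa [g, weightedInner_inner_right] using congr(⟪$hcent, θ⟫))
    fun i hi => by
      rw [weightedInner_inner_right]
      exact Submodule.inner_right_of_mem_orthogonal
        (Submodule.subset_span (mem_image_of_mem v (mem_Iio.mpr hi))) hθW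
  have henergy := G.weightedInner_graphLaplacian_self_nonneg g
  calc _ ≤ ((finrank ℝ F - #(Iio m) : ℕ) : ℝ) *
        weightedInner (stationaryMeasure G) (graphLaplacian G g) g := by gcongr
    _ ≤ _ := by gcongr
    _ ≤ 1 := hθE

end SimpleGraph

theorem Real.sqrt_le_two_mul_rpow_neg_half {q n l : ℝ} (hn : 0 < n) (hl : 0 < l)
    (h : n * (l * q) ≤ 2) : √q ≤ 2 * n ^ (-(1 / 2) : ℝ) * l ^ (-(1 / 2) : ℝ) := by
  rw [rpow_neg hn.le, rpow_neg hl.le, ← sqrt_eq_rpow, ← sqrt_eq_rpow, sqrt_le_iff]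
  refine ⟨by positivity, ?_⟩
  rw [mul_pow, mul_pow, inv_pow, inv_pow, sq_sqrt hn.le, sq_sqrt hl.le]
  rw [← le_div_iff₀' hn, ← le_div_iff₀' hl] at h
  calc q ≤ 2 / n / l := h
    _ = 2 * n⁻¹ * l⁻¹ := by ring
    _ ≤ 2 ^ 2 * n⁻¹ * l⁻¹ := by gcongr; norm_num

/-- `lam` lists the nonzero eigenvalues zero-based, `lam ⟨k - 1, _⟩ = λ_k`, with the linearly
independent eigenfunctions `f`. -/
theorem main_projection_theorem_mean_zero :
    ∃ c : ℝ, 0 < c ∧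
      ∀ (V : Type) [Fintype V] (G : SimpleGraph V) [DecidableRel G.Adj],
        G.Connected →
        ∀ (lam : Fin (Fintype.card V - 1) → ℝ) (f : Fin (Fintype.card V - 1) → V → ℝ),
          Monotone lam →
          (∀ i, lam i ≠ 0) →
          LinearIndependent ℝ f →
          (∀ i x, graphLaplacian G (f i) x = lam i * f i x) →
          ∀ (n : ℕ), 1 < n →
            ∀ (hidx : n / 2 - 1 < Fintype.card V - 1),
              ∀ T : V → EuclideanSpace ℝ (Fin n),
                (∀ x y : V, ‖T x - T y‖ ≤ (G.dist x y : ℝ)) →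
                (∑ x : V, stationaryMeasure G x • T x) = 0 →
                ∃ θ : EuclideanSpace ℝ (Fin n), ‖θ‖ = 1 ∧
                  Real.sqrt (∑ x : V, (inner ℝ (T x) θ : ℝ) ^ 2 * stationaryMeasure G x) ≤
                    c * (n : ℝ) ^ (-(1 / 2) : ℝ) *
                      (lam ⟨n / 2 - 1, hidx⟩) ^ (-(1 / 2) : ℝ) := by
  refine ⟨2, two_pos, fun V _ G _ hconn lam f hmono hne hli heig n hn hidx T hlip hcent => ?_⟩
  have : Nontrivial V := Fintype.one_lt_card_iff_nontrivial.mp (by omega)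
  have hd : ∀ x, 0 < G.degree x := fun x => hconn.preconnected.degree_pos_of_nontrivial x
  have heig' : ∀ i, graphLaplacian G (f i) = lam i • f i := fun i => funext (heig i)
  set m : Fin (Fintype.card V - 1) := ⟨n / 2 - 1, hidx⟩
  have hm : #(Iio m) = n / 2 - 1 := by simp [m]
  obtain ⟨θ, hθ, hbound⟩ := G.exists_norm_eq_one_mul_eigenvalue_mul_weightedInner_le hd
    (by rw [Fintype.card_fin]; omega) hmono hne hli heig' m (by rw [hm, finrank_euclideanSpace_fin]; omega) T
    (fun x y hxy => (hlip x y).trans (by simp [SimpleGraph.dist_eq_one_iff_adj.mpr hxy])) hcent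
  have hlam : 0 < lam m := (G.eigenvalue_nonneg hd (hli.ne_zero m) (heig' m)).lt_of_ne' (hne m)
  refine ⟨θ, hθ, Real.sqrt_le_two_mul_rpow_neg_half (by positivity) hlam ?_⟩
  rw [hm, finrank_euclideanSpace_fin] at hbound
  have hq : ∑ x, ⟪T x, θ⟫ ^ 2 * stationaryMeasure G x =
      weightedInner (stationaryMeasure G) (fun x => ⟪T x, θ⟫) (fun x => ⟪T x, θ⟫) :=
    sum_congr rfl fun x _ => by ring
  have hn : (n : ℝ) ≤ 2 * (n - (n / 2 - 1) : ℕ) := by exact_mod_cast (by omega)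
  have hnonneg := mul_nonneg hlam.le
    (weightedInner_self_nonneg G.stationaryMeasure_nonneg fun x => ⟪T x, θ⟫)
  rw [hq]
  nlinarith
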